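/- arXiv:2006.01893 — 3 statements merged into one kernel-verified Lean document; each statement's English description precedes it below -/
import Mathlib

section
/- The maximized likelihood Π_j (h_j ε^l / (n |S_j|))^{h_j}, summed over all possible data sequences generated by a histogram with K regions on an l-dimensional grid of precision ε, equals Σ_{h_1+...+h_K=n} (n!/(h_1!...h_K!)) Π_j (h_j/n)^{h_j}; in particular this parametric complexity is independent of the dimensionality l and of the region volumes |S_j|. -/
open Finset

/-- The multinomial parametric complexity:
COMP(n,K) = ∑_{h_1+⋯+h_K=n} (n!/(h_1!⋯h_K!)) ∏_j (h_j/n)^{h_j}. -/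
noncomputable def COMP (n K : ℕ) : ℝ :=
  ∑ h ∈ Finset.Nat.antidiagonalTuple K n,
    (Nat.multinomial Finset.univ h : ℝ) * ∏ j, ((h j : ℝ) / n) ^ (h j)

/-!
A sequence of cells is a sequence of regions together with a choice of cell inside each
region, and the maximized likelihood depends only on the region counts `h_j`. For a fixed
sequence of regions there are `∏_j m_j ^ h_j` choices of cells, which cancels the `m_j` in the
denominators. What remains is a function of the counts alone, and summing it over all
sequences of regions groups them by their counts: exactly `n! / ∏_j h_j!` sequences have counts
`h`, as one reads off the coefficient of `∏_j X_j ^ h_j` in `(∑_j X_j) ^ n`.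
-/

section FiberCard

variable {ι α : Type*} [Fintype ι] [DecidableEq α]

/-- The histogram `h_j(y)` of a sequence `y` of regions. -/
def fiberCard (p : ι → α) (a : α) : ℕ := #{i | p i = a}

variable [Fintype α]

lemma sum_fiberCard (p : ι → α) : ∑ a, fiberCard p a = Fintype.card ι :=
  (card_eq_sum_card_fiberwise fun i _ ↦ mem_univ (p i)).symm

lemma prod_comp_eq_prod_pow_fiberCard {M : Type*} [CommMonoid M] (p : ι → α) (f : α → M) :
    ∏ i, f (p i) = ∏ a, f a ^ fiberCard p a := by
  rw [← prod_fiberwise univ p]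
  refine prod_congr rfl fun a _ ↦ ?_
  rw [prod_congr rfl fun i hi ↦ by rw [(mem_filter.1 hi).2], prod_const]
  rfl

open MvPolynomial in
lemma card_fiberCard_eq_multinomial [DecidableEq ι] (h : α → ℕ)
    (hh : ∑ a, h a = Fintype.card ι) :
    #{p : ι → α | fiberCard p = h} = Nat.multinomial univ h := by
  set d := Finsupp.equivFunOnFinite.symm h
  have monomial_fiberCard (p : ι → α) : ∏ i, (X (p i) : MvPolynomial α ℕ)
      = monomial (Finsupp.equivFunOnFinite.symm (fiberCard p)) 1 := by
    rw [monomial_eq, C_1, one_mul, Finsupp.prod_fintype _ _ fun _ ↦ pow_zero _,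
      prod_comp_eq_prod_pow_fiberCard p X]
    rfl
  have expand : (∑ a, X a : MvPolynomial α ℕ) ^ Fintype.card ι
      = ∑ p : ι → α, monomial (Finsupp.equivFunOnFinite.symm (fiberCard p)) 1 := by
    rw [← card_univ, ← prod_const, prod_univ_sum, Fintype.piFinset_univ]
    exact sum_congr rfl fun p _ ↦ monomial_fiberCard p
  have coeff_d := congrArg (coeff d) expand
  rw [coeff_sum_X_pow_of_fintype, coeff_sum, Finsupp.sum_fintype _ _ fun _ ↦ rfl,
    Finsupp.multinomial_eq_of_support_subset (subset_univ _), Nat.cast_id] at coeff_d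
  simp only [d, coeff_monomial, Finsupp.coe_equivFunOnFinite_symm, hh, if_true,
    Equiv.apply_eq_iff_eq, sum_boole, Nat.cast_id] at coeff_d
  exact coeff_d.symm

lemma sum_comp_fiberCard [DecidableEq ι] {M : Type*} [AddCommMonoid M] (g : (α → ℕ) → M) :
    ∑ p : ι → α, g (fiberCard p)
      = ∑ h ∈ piAntidiag univ (Fintype.card ι), Nat.multinomial univ h • g h := by
  rw [← sum_fiberwise_of_maps_to (t := piAntidiag univ (Fintype.card ι)) (g := fiberCard)
    fun p _ ↦ by simp [sum_fiberCard p]]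
  refine sum_congr rfl fun h hh ↦ ?_
  rw [sum_congr rfl fun p hp ↦ by rw [(mem_filter.1 hp).2], sum_const,
    card_fiberCard_eq_multinomial h (by simpa using (mem_piAntidiag.1 hh).1)]

end FiberCard

def Equiv.funSigmaEquivSigmaPi (ι α : Type*) (β : α → Type*) :
    (ι → Σ a, β a) ≃ Σ p : ι → α, ∀ i, β (p i) where
  toFun y := ⟨fun i ↦ (y i).1, fun i ↦ (y i).2⟩
  invFun z i := ⟨z.1 i, z.2 i⟩

lemma sum_fun_sigma_comp_fst {ι α : Type*} [Fintype ι] [DecidableEq ι] [Fintype α]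
    {β : α → Type*} [∀ a, Fintype (β a)] {M : Type*} [AddCommMonoid M] (F : (ι → α) → M) :
    ∑ y : ι → Σ a, β a, F (fun i ↦ (y i).1)
      = ∑ p : ι → α, (∏ i, Fintype.card (β (p i))) • F p := by
  rw [← (Equiv.funSigmaEquivSigmaPi ι α β).symm.sum_comp, Fintype.sum_sigma]
  refine sum_congr rfl fun p _ ↦ ?_
  change ∑ _ : ∀ i, β (p i), F p = _
  rw [sum_const, card_univ, Fintype.card_pi]

/-- Summing the maximized likelihood ∏_j (h_j(y)/(n·m_j))^{h_j(y)}
over all sequences y of n points, each placed in one of the grid cells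
(region j has m_j = |S_j|/ε^l cells), gives
∑_{h_1+⋯+h_K=n} (n!/(h_1!⋯h_K!)) ∏_j (h_j/n)^{h_j}; in particular the
parametric complexity is independent of the dimensionality l and of the
region volumes |S_j| (the right-hand side does not depend on m). -/
theorem parametric_complexity_dimension_free {K n : ℕ} (m : Fin K → ℕ)
    (hm : ∀ j, 0 < m j) :
    (∑ y : Fin n → (j : Fin K) × Fin (m j),
      ∏ j, (((Finset.univ.filter (fun i => (y i).1 = j)).card : ℝ) / (n * m j))
            ^ ((Finset.univ.filter (fun i => (y i).1 = j)).card))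
      = COMP n K := by
  set maxLikelihood : (Fin n → Fin K) → ℝ :=
    fun p ↦ ∏ j, ((fiberCard p j : ℝ) / (n * m j)) ^ fiberCard p j
  have cells_mul_maxLikelihood (p : Fin n → Fin K) :
      (∏ i, Fintype.card (Fin (m (p i)))) • maxLikelihood p
        = ∏ j, ((fiberCard p j : ℝ) / n) ^ fiberCard p j := by
    simp only [Fintype.card_fin, nsmul_eq_mul, Nat.cast_prod, maxLikelihood,
      prod_comp_eq_prod_pow_fiberCard p, Nat.cast_pow, ← prod_mul_distrib, ← mul_pow]
    refine prod_congr rfl fun j _ ↦ congrArg (· ^ fiberCard p j) ?_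
    have : (m j : ℝ) ≠ 0 := by exact_mod_cast (hm j).ne'
    field_simp
  calc _ = ∑ y : Fin n → (j : Fin K) × Fin (m j), maxLikelihood (fun i ↦ (y i).1) := rfl
    _ = ∑ p : Fin n → Fin K, ∏ j, ((fiberCard p j : ℝ) / n) ^ fiberCard p j := by
      rw [sum_fun_sigma_comp_fst]
      exact sum_congr rfl fun p _ ↦ cells_mul_maxLikelihood p
    _ = COMP n K := by
      rw [sum_comp_fiberCard (fun h ↦ ∏ j, ((h j : ℝ) / n) ^ h j), Fintype.card_fin,
        piAntidiag_univ_fin_eq_antidiagonalTuple]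
      simp only [nsmul_eq_mul, COMP]
end

section
/- The multinomial parametric complexity satisfies the recursion COMP(n, K) = COMP(n, K−1) + (n/(K−2))·COMP(n, K−2) for K ≥ 3, where COMP(n, K) = Σ_{h_1+...+h_K=n} (n!/(h_1!...h_K!)) Π_{j=1}^K (h_j/n)^{h_j}. -/
/-!
Let `E = ∑ nⁿ xⁿ / n!` and let `T = ∑_{n ≥ 1} n^(n-1) xⁿ / n!` be the tree function, so that
`COMP n K = n! / nⁿ · [xⁿ] E^K`. Abel's identity `∑_{k ≥ 1} C(n,k) k^(k-1) (n-k)^(n-k) = nⁿ` says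
`T * E = E - 1`, and termwise `x T' = E - 1`. Differentiating `T * E = E - 1` and using
`E * (1 - T) = 1` gives `x E' = E³ - E²`, hence `x (E^(m+1))' = (m+1) (E^(m+3) - E^(m+2))`, whose
coefficient of `xⁿ` is the recursion.

Abel's identity is proved by induction on `n` for the polynomial
`∑_{k ≥ 1} C(n,k) k^(k-1) (X - k)^(n-k)`: its derivative is `n` times its predecessor, and at `0`
it reduces to an alternating sum `∑ (-1)^(n-k) C(n,k) kᵈ` with `d < n`, an `n`-th forward
difference of a polynomial of degree `d`.
-/

open Finset

open scoped Nat

theorem sum_range_neg_one_pow_mul_choose_mul_pow_eq_zero {R : Type*} [CommRing R] {d n : ℕ}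
    (h : d < n) : ∑ k ∈ range (n + 1), (-1 : R) ^ (n - k) * n.choose k * (k : R) ^ d = 0 := by
  have := congrFun (fwdDiff_iter_pow_eq_zero_of_lt (R := R) h) 0
  rw [fwdDiff_iter_eq_sum_shift] at this
  simpa [zsmul_eq_mul, mul_assoc] using this

namespace Polynomial

variable (R : Type*) [CommRing R]

noncomputable def abelSum (n : ℕ) : R[X] :=
  ∑ k ∈ Icc 1 n, (n.choose k * k ^ (k - 1) : R[X]) * (X - (k : R[X])) ^ (n - k)

variable {R}

theorem derivative_abelSum_succ (n : ℕ) :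
    derivative (abelSum R (n + 1)) = (n + 1 : R[X]) * abelSum R n := by
  have hterm (k : ℕ) :
      derivative (((n + 1).choose k * k ^ (k - 1) : R[X]) * (X - (k : R[X])) ^ (n + 1 - k)) =
        ((n + 1).choose k * (n + 1 - k : ℕ) : R[X]) *
          ((k : R[X]) ^ (k - 1) * (X - (k : R[X])) ^ (n - k)) := by
    simp only [derivative_mul, derivative_natCast, zero_mul, derivative_pow, map_natCast, mul_zero,
      add_zero, show n + 1 - k - 1 = n - k by omega, derivative_sub, derivative_X, sub_zero, mul_one,
      zero_add]
    ring
  unfold abelSum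
  rw [derivative_sum, sum_congr rfl fun k _ => hterm k, sum_Icc_succ_top (by omega),
    Nat.sub_self, Nat.cast_zero, mul_zero, zero_mul, add_zero, mul_sum]
  refine sum_congr rfl fun k _ => ?_
  have hchoose : ((n + 1).choose k * (n + 1 - k : ℕ) : R[X]) = (n + 1) * n.choose k := by
    exact_mod_cast congrArg (Nat.cast : ℕ → R[X])
      ((n.choose_mul_succ_eq k).symm.trans (mul_comm _ _))
  rw [hchoose]
  ring

theorem eval_zero_abelSum_succ (n : ℕ) : (abelSum R (n + 1)).eval 0 = (n + 1) * 0 ^ n := by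
  rcases n with _ | n
  · simp [abelSum]
  have hterm : ∀ k ∈ Icc 1 (n + 2), ((n + 2).choose k * k ^ (k - 1) : R) * (0 - k) ^ (n + 2 - k) =
      (-1) ^ (n + 2 - k) * (n + 2).choose k * (k : R) ^ (n + 1) := by
    intro k hk
    obtain ⟨hk1, hk2⟩ := mem_Icc.1 hk
    rw [zero_sub, neg_pow, show n + 1 = (k - 1) + (n + 2 - k) by omega, pow_add]
    ring
  unfold abelSum
  simp only [eval_finsetSum, eval_mul, eval_pow, eval_sub, eval_X, eval_natCast]
  have halt := sum_range_neg_one_pow_mul_choose_mul_pow_eq_zero (R := R)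
    (show n + 1 < n + 2 by omega)
  rw [range_eq_Ico, sum_eq_sum_Ico_succ_bot (by omega), Ico_add_one_right_eq_Icc] at halt
  rw [sum_congr rfl hterm]
  simpa using halt

theorem abelSum_eq [IsAddTorsionFree R] (n : ℕ) : abelSum R n = (n : R[X]) * X ^ (n - 1) := by
  induction n with
  | zero => simp [abelSum]
  | succ n ih =>
    have hconst : (abelSum R (n + 1) - (n + 1 : R[X]) * X ^ n).natDegree = 0 := by
      rw [← derivative_eq_zero, derivative_sub, derivative_abelSum_succ, ih]
      simp [derivative_X_pow]
    rw [Nat.add_sub_cancel, Nat.cast_succ, ← sub_eq_zero, eq_C_of_natDegree_eq_zero hconst,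
      coeff_zero_eq_eval_zero, eval_sub, eval_zero_abelSum_succ]
    simp

end Polynomial

open Polynomial in
theorem Nat.abel_identity {n : ℕ} (hn : 0 < n) :
    ∑ k ∈ Icc 1 n, n.choose k * k ^ (k - 1) * (n - k) ^ (n - k) = n ^ n := by
  have h := congrArg (eval (n : ℤ)) (abelSum_eq (R := ℤ) n)
  simp only [abelSum, eval_finsetSum, eval_mul, eval_pow, eval_sub, eval_X, eval_natCast] at h
  zify
  rw [sum_congr rfl fun k hk => by rw [Nat.cast_sub (mem_Icc.1 hk).2], h, mul_pow_sub_one hn.ne']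

namespace PowerSeries

theorem coeff_X_mul_derivative {R : Type*} [CommSemiring R] (f : R⟦X⟧) (n : ℕ) :
    coeff n (X * d⁄dX R f) = n * coeff n f := by
  rcases n with _ | n
  · simp
  rw [coeff_succ_X_mul, coeff_derivative, mul_comm, Nat.cast_succ]

theorem coeff_pow_eq_sum_antidiagonalTuple {R : Type*} [CommSemiring R] (f : R⟦X⟧) (k n : ℕ) :
    coeff n (f ^ k) = ∑ h ∈ Nat.antidiagonalTuple k n, ∏ j, coeff (h j) f := by
  rw [← Fin.prod_const, coeff_prod, finsuppAntidiag, sum_map,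
    ← piAntidiag_univ_fin_eq_antidiagonalTuple]
  exact sum_attach (piAntidiag univ n) fun h => ∏ j, coeff (h j) f

variable (F : Type*) [Field F]

noncomputable def endofunctionEGF : F⟦X⟧ := mk fun n => (n : F) ^ n / n !

noncomputable def rootedTreeEGF : F⟦X⟧ :=
  mk fun n => if n = 0 then 0 else (n : F) ^ (n - 1) / n !

variable {F}

theorem X_mul_derivative_rootedTreeEGF :
    X * d⁄dX F (rootedTreeEGF F) = endofunctionEGF F - 1 := by
  ext n
  rw [coeff_X_mul_derivative, map_sub, coeff_one]
  rcases n with _ | n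
  · simp [endofunctionEGF]
  rw [rootedTreeEGF, endofunctionEGF, coeff_mk, coeff_mk, if_neg n.succ_ne_zero,
    if_neg n.succ_ne_zero, sub_zero, Nat.add_sub_cancel, pow_succ]
  ring

variable [CharZero F]

theorem rootedTreeEGF_mul_endofunctionEGF :
    rootedTreeEGF F * endofunctionEGF F = endofunctionEGF F - 1 := by
  ext n
  rcases n with _ | n
  · simp [rootedTreeEGF, endofunctionEGF]
  have hterm : ∀ k ∈ Icc 1 (n + 1),
      coeff k (rootedTreeEGF F) * coeff (n + 1 - k) (endofunctionEGF F) =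
        ((n + 1).choose k * k ^ (k - 1) * (n + 1 - k : ℕ) ^ (n + 1 - k) : ℕ) / (n + 1)! := by
    intro k hk
    obtain ⟨hk1, hk2⟩ := mem_Icc.1 hk
    rw [rootedTreeEGF, endofunctionEGF, coeff_mk, coeff_mk, if_neg (by omega), Nat.cast_mul,
      Nat.cast_mul, Nat.cast_choose F hk2]
    have hfact : ((n + 1)! : F) ≠ 0 := Nat.cast_ne_zero.2 (Nat.factorial_ne_zero _)
    push_cast
    field_simp
  rw [coeff_mul, Nat.sum_antidiagonal_eq_sum_range_succ (fun i j => coeff i _ * coeff j _),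
    sum_range_eq_add_Ico _ (n + 1).succ_pos, Nat.succ_eq_add_one, Ico_add_one_right_eq_Icc,
    sum_congr rfl hterm, ← sum_div, ← Nat.cast_sum, Nat.abel_identity n.succ_pos]
  simp [rootedTreeEGF, endofunctionEGF]

theorem X_mul_derivative_endofunctionEGF :
    X * d⁄dX F (endofunctionEGF F) = endofunctionEGF F ^ 3 - endofunctionEGF F ^ 2 := by
  have hderiv := congrArg (d⁄dX F) (rootedTreeEGF_mul_endofunctionEGF (F := F))
  rw [Derivation.leibniz, map_sub, derivative_one, sub_zero, smul_eq_mul, smul_eq_mul] at hderiv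
  linear_combination X * d⁄dX F (endofunctionEGF F) * rootedTreeEGF_mul_endofunctionEGF (F := F) -
    X * endofunctionEGF F * hderiv + endofunctionEGF F ^ 2 * X_mul_derivative_rootedTreeEGF (F := F)

theorem X_mul_derivative_endofunctionEGF_pow (m : ℕ) :
    X * d⁄dX F (endofunctionEGF F ^ (m + 1)) =
      (m + 1) • (endofunctionEGF F ^ (m + 3) - endofunctionEGF F ^ (m + 2)) := by
  rw [Derivation.leibniz_pow, smul_eq_mul, mul_smul_comm, Nat.add_sub_cancel, mul_left_comm,
    X_mul_derivative_endofunctionEGF]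
  ring

theorem coeff_endofunctionEGF_pow_add_three (m n : ℕ) :
    coeff n (endofunctionEGF F ^ (m + 3)) =
      coeff n (endofunctionEGF F ^ (m + 2)) +
        n / (m + 1) * coeff n (endofunctionEGF F ^ (m + 1)) := by
  have hcoeff := congrArg (coeff n) (X_mul_derivative_endofunctionEGF_pow (F := F) m)
  rw [coeff_X_mul_derivative, map_nsmul, map_sub, nsmul_eq_mul, Nat.cast_succ] at hcoeff
  have hm : (m + 1 : F) ≠ 0 := by exact_mod_cast m.succ_ne_zero
  field_simp
  linear_combination -hcoeff

end PowerSeries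

open PowerSeries

theorem COMP_eq_mul_coeff_endofunctionEGF_pow (n K : ℕ) :
    COMP n K = n ! / n ^ n * coeff n (endofunctionEGF ℝ ^ K) := by
  rw [coeff_pow_eq_sum_antidiagonalTuple, COMP, mul_sum]
  refine sum_congr rfl fun h hh => ?_
  have hsum : ∑ j, h j = n := Nat.mem_antidiagonalTuple.1 hh
  have hmultinomial : (Nat.multinomial univ h : ℝ) = n ! / ∏ j, ((h j)! : ℝ) := by
    rw [eq_div_iff (by positivity), mul_comm, ← hsum]
    exact_mod_cast Nat.multinomial_spec univ h
  have hprod : ∏ j, ((h j : ℝ) / n) ^ h j = (∏ j, (h j : ℝ) ^ h j) / (n : ℝ) ^ n := by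
    rw [← hsum, ← prod_pow_eq_pow_sum, ← prod_div_distrib]
    simp only [div_pow]
  simp only [endofunctionEGF, coeff_mk]
  rw [hmultinomial, hprod, prod_div_distrib]
  ring

theorem COMP_recursion_general (n K : ℕ) (hK : 3 ≤ K) :
    COMP n K = COMP n (K - 1) + (n : ℝ) / ((K : ℝ) - 2) * COMP n (K - 2) := by
  obtain ⟨m, rfl⟩ : ∃ m, K = m + 3 := ⟨K - 3, by omega⟩
  have hcast : ((m + 3 : ℕ) : ℝ) - 2 = m + 1 := by push_cast; ring
  rw [show m + 3 - 1 = m + 2 from rfl, show m + 3 - 2 = m + 1 from rfl, hcast,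
    COMP_eq_mul_coeff_endofunctionEGF_pow, COMP_eq_mul_coeff_endofunctionEGF_pow,
    COMP_eq_mul_coeff_endofunctionEGF_pow, coeff_endofunctionEGF_pow_add_three]
  ring

/-- The recursion
COMP(n, K) = COMP(n, K−1) + (n/(K−2))·COMP(n, K−2) for K ≥ 3. -/
theorem COMP_recursion (n K : ℕ) (hn : 0 < n) (hK : 3 ≤ K) :
    COMP n K = COMP n (K - 1) + (n : ℝ) / ((K : ℝ) - 2) * COMP n (K - 2) :=
  COMP_recursion_general n K hK
end

section
/- Let C_i < C_k be two cut points such that no data point lies in the interval [C_i, C_k]. Then for any cut point set containing a cut C_j with C_i < C_j < C_k, moving C_j to either C_i or C_k (whichever gives higher likelihood) does not decrease the histogram likelihood P(z^n | ·); hence some MDL-optimal K-bin cut point set uses no interior cut point of a data-free interval. -/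
/-!
With the bin counts fixed, the likelihood as a function of the left bin width `s` is
`c * exp (-(h_L * log s + h_R * log (w - s)))` with `c ≥ 0`. The exponent is concave, so the
likelihood is convex on `(0, w)`, and a convex function attains its maximum over `[a, b]` at an
endpoint.
-/

open Set Real

/-- Likelihood factor of the two bins adjacent to a moved cut: `s` is the width of the left bin,
`w` the combined width, `h_L`, `h_R` the bin counts and `n` the sample size. -/
noncomputable def cutLikelihood (n w : ℝ) (h_L h_R : ℕ) (s : ℝ) : ℝ :=
  ((h_L : ℝ) / (n * s)) ^ h_L * ((h_R : ℝ) / (n * (w - s))) ^ h_R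

theorem ConvexOn.exp {E : Type*} [AddCommMonoid E] [SMul ℝ E] {s : Set E} {f : E → ℝ}
    (hf : ConvexOn ℝ s f) : ConvexOn ℝ s (fun x => Real.exp (f x)) :=
  ⟨hf.1, fun x hx y hy a b ha hb hab => calc
    Real.exp (f (a • x + b • y)) ≤ Real.exp (a • f x + b • f y) :=
      exp_le_exp.2 (hf.2 hx hy ha hb hab)
    _ ≤ a • Real.exp (f x) + b • Real.exp (f y) := convexOn_exp.2 trivial trivial ha hb hab⟩

theorem concaveOn_log_sub (w : ℝ) : ConcaveOn ℝ (Iio w) (fun s => log (w - s)) := by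
  have h := strictConcaveOn_log_Ioi.concaveOn.comp_affineMap
    (AffineMap.const ℝ ℝ w - AffineMap.id ℝ ℝ)
  have hpre : (AffineMap.const ℝ ℝ w - AffineMap.id ℝ ℝ) ⁻¹' Ioi 0 = Iio w := by ext; simp
  rwa [hpre] at h

theorem concaveOn_mul_log_add_mul_log_sub {p q : ℝ} (hp : 0 ≤ p) (hq : 0 ≤ q) (w : ℝ) :
    ConcaveOn ℝ (Ioo 0 w) (fun s => p * log s + q * log (w - s)) :=
  ((strictConcaveOn_log_Ioi.concaveOn.subset Ioo_subset_Ioi_self (convex_Ioo 0 w)).smul hp).add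
    (((concaveOn_log_sub w).subset Ioo_subset_Iio_self (convex_Ioo 0 w)).smul hq)

theorem cutLikelihood_eq_mul_exp (n w : ℝ) (h_L h_R : ℕ) {s : ℝ} (hs : s ∈ Ioo 0 w) :
    cutLikelihood n w h_L h_R s =
      ((h_L / n) ^ h_L * (h_R / n) ^ h_R) * Real.exp (-(h_L * log s + h_R * log (w - s))) := by
  have hs₀ : 0 < s := hs.1
  have hws : 0 < w - s := sub_pos.2 hs.2
  rw [← log_pow, ← log_pow, ← log_mul (by positivity) (by positivity), exp_neg,
    exp_log (by positivity), cutLikelihood, div_mul_eq_div_div, div_mul_eq_div_div, div_pow,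
    div_pow]
  ring

theorem convexOn_cutLikelihood {n : ℝ} (hn : 0 ≤ n) (w : ℝ) (h_L h_R : ℕ) :
    ConvexOn ℝ (Ioo 0 w) (cutLikelihood n w h_L h_R) :=
  ((concaveOn_mul_log_add_mul_log_sub h_L.cast_nonneg h_R.cast_nonneg w).neg.exp.smul
    (by positivity)).congr fun _ hs => (cutLikelihood_eq_mul_exp n w h_L h_R hs).symm

theorem data_free_interval_cut_at_endpoint_general (n w : ℝ) (h_L h_R : ℕ) (a b : ℝ)
    (hn : 0 < n) (ha : 0 < a) (hb : b < w) :
    let G : ℝ → ℝ :=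
      fun s => ((h_L : ℝ) / (n * s)) ^ h_L * ((h_R : ℝ) / (n * (w - s))) ^ h_R
    (∀ s ∈ Icc a b, G s ≤ max (G a) (G b)) ∧
    ∃ t ∈ ({a, b} : Set ℝ), ∀ s ∈ Icc a b, G s ≤ G t := by
  intro G
  have hG : ConvexOn ℝ (Ioo 0 w) G := convexOn_cutLikelihood hn.le w h_L h_R
  have h_max : ∀ s ∈ Icc a b, G s ≤ max (G a) (G b) := fun s hs =>
    hG.le_max_of_mem_Icc ⟨ha, hs.1.trans_lt (hs.2.trans_lt hb)⟩
      ⟨ha.trans_le (hs.1.trans hs.2), hb⟩ hs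
  refine ⟨h_max, ?_⟩
  rcases le_total (G a) (G b) with h | h
  · exact ⟨b, Or.inr rfl, fun s hs => (h_max s hs).trans_eq (max_eq_right h)⟩
  · exact ⟨a, Or.inl rfl, fun s hs => (h_max s hs).trans_eq (max_eq_left h)⟩

/-- Let C_i < C_k be cut points with no data point in [C_i, C_k],
and let a cut C_j lie between them. Moving C_j keeps all bin counts fixed and
changes only the widths of the two adjacent bins; writing s for the width of
the left adjacent bin (varying in [a,b] as C_j ranges over [C_i,C_k], with
combined width w), the likelihood factor is
G(s) = (h_L/(n s))^{h_L} · (h_R/(n(w−s)))^{h_R}. Then moving C_j to an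
endpoint (whichever gives higher likelihood) does not decrease the likelihood:
G(s) ≤ max(G(a), G(b)) for all s ∈ [a,b]; hence some optimal position of the
cut point is at an endpoint, i.e., some MDL-optimal K-bin cut point set uses
no interior cut point of a data-free interval. -/
theorem data_free_interval_cut_at_endpoint (n w : ℝ) (h_L h_R : ℕ) (a b : ℝ)
    (hn : 0 < n) (ha : 0 < a) (hab : a ≤ b) (hb : b < w) :
    let G : ℝ → ℝ :=
      fun s => ((h_L : ℝ) / (n * s)) ^ h_L * ((h_R : ℝ) / (n * (w - s))) ^ h_R
    (∀ s ∈ Icc a b, G s ≤ max (G a) (G b)) ∧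
    ∃ t ∈ ({a, b} : Set ℝ), ∀ s ∈ Icc a b, G s ≤ G t :=
  data_free_interval_cut_at_endpoint_general n w h_L h_R a b hn ha hb
end
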